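/- Let 0<x<1 be real and r∈ℂ with Re(r)>0; set r* := r−1. Then for every complex w with |w|<1 and |x^{2r−2}w|<1 the series ∑_{m=1}^∞ (1/m)·( (x^{r*m}−x^{−r*m})(x^m+x^{−m}) / (x^{rm}−x^{−rm}) )·w^m converges absolutely and exp( − ∑_{m=1}^∞ (1/m)·( (x^{r*m}−x^{−r*m})(x^m+x^{−m}) / (x^{rm}−x^{−rm}) )·w^m ) = (1−w) · (x²w;x^{2r})_∞ / (x^{2r−2}w;x^{2r})_∞. -/

import Mathlib

open Complex

/-- `x^w := exp(w · log x)` for real `x` and complex `w`. -/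
noncomputable def xpow (x : ℝ) (w : ℂ) : ℂ := Complex.exp (w * (Real.log x : ℂ))

/-- The infinite `q`-Pochhammer product `(z;q)_∞ = ∏_{j=0}^∞ (1 − q^j z)`. -/
noncomputable def qPoch (z q : ℂ) : ℂ := ∏' j : ℕ, (1 - q ^ j * z)

/-- `Θ_q(z) = (z;q)_∞ (q z⁻¹;q)_∞ (q;q)_∞`. -/
noncomputable def jacTheta0 (q z : ℂ) : ℂ := qPoch z q * qPoch (q * z⁻¹) q * qPoch q q

/-- The Jacobi theta function `[u]_r = x^{u²/r − u} Θ_{x^{2r}}(x^{2u}) / ((x^{2r};x^{2r})_∞)³`. -/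
noncomputable def jTheta (x : ℝ) (r u : ℂ) : ℂ :=
  xpow x (u ^ 2 / r - u) * jacTheta0 (xpow x (2 * r)) (xpow x (2 * u)) /
    (qPoch (xpow x (2 * r)) (xpow x (2 * r))) ^ 3

/-- `m`-th term of the `F_j F_j` contraction series (with `r* = r − 1`). -/
noncomputable def FFterm (x : ℝ) (r w : ℂ) (m : ℕ) : ℂ :=
  (1 / (m : ℂ)) * ((xpow x ((r - 1) * m) - xpow x (-(r - 1) * m)) *
      (xpow x m + xpow x (-m)) / (xpow x (r * m) - xpow x (-r * m))) * w ^ m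

/-!
With `u = x^{rm}` and `v = x^m`, partial fractions give the `m`-th coefficient as
`1 + (v² - u²v⁻²)/(1 - u²)`, so the series splits as `∑ wᵐ/m + ∑ (x²w)ᵐ/(m(1-x^{2rm})) -
∑ (x^{2r-2}w)ᵐ/(m(1-x^{2rm}))`. Each piece is `-log (z;q)_∞` with `q = 0` or `q = x^{2r}`:
expanding `1/(1-qᵐ)` geometrically and summing over `m` first gives `-∑ⱼ log(1 - qʲz)`, the
absolutely convergent double series justifying the exchange.
-/

lemma xpow_add (x : ℝ) (a b : ℂ) : xpow x (a + b) = xpow x a * xpow x b := by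
  simp [xpow, add_mul, exp_add]

lemma xpow_neg (x : ℝ) (a : ℂ) : xpow x (-a) = (xpow x a)⁻¹ := by
  simp [xpow, ← exp_neg]

lemma xpow_ne_zero (x : ℝ) (a : ℂ) : xpow x a ≠ 0 := exp_ne_zero _

lemma xpow_sub (x : ℝ) (a b : ℂ) : xpow x (a - b) = xpow x a / xpow x b := by
  rw [sub_eq_add_neg, xpow_add, xpow_neg, div_eq_mul_inv]

lemma xpow_mul_natCast (x : ℝ) (a : ℂ) (n : ℕ) : xpow x (a * n) = xpow x a ^ n := by
  rw [xpow, xpow, mul_comm a, mul_assoc, exp_nat_mul]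

lemma xpow_two_mul (x : ℝ) (a : ℂ) : xpow x (2 * a) = xpow x a ^ 2 := by
  rw [mul_comm, ← xpow_mul_natCast]; norm_num

lemma norm_xpow {x : ℝ} (hx : 0 < x) (a : ℂ) : ‖xpow x a‖ = x ^ a.re := by
  rw [xpow, norm_exp, Real.rpow_def_of_pos hx, mul_comm]
  simp

lemma norm_xpow_lt_one {x : ℝ} (hx0 : 0 < x) (hx1 : x < 1) {a : ℂ} (ha : 0 < a.re) :
    ‖xpow x a‖ < 1 := by
  rw [norm_xpow hx0]
  exact Real.rpow_lt_one hx0.le hx1 ha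

/-- The coefficient of index `m + 1` in `-log (z;q)_∞ = ∑_{n ≥ 1} zⁿ / (n (1 - qⁿ))`. -/
noncomputable def negLogQPochTerm (q z : ℂ) (m : ℕ) : ℂ :=
  z ^ (m + 1) / ((m + 1) * (1 - q ^ (m + 1)))

section
variable {q z : ℂ}

lemma norm_pow_mul_lt_one (hq : ‖q‖ < 1) (hz : ‖z‖ < 1) (j : ℕ) : ‖q ^ j * z‖ < 1 := by
  rw [norm_mul, norm_pow]
  exact mul_lt_one_of_nonneg_of_lt_one_right (pow_le_one₀ (norm_nonneg q) hq.le) (norm_nonneg z) hz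

lemma hasSum_geometric_pow_succ_div (hq : ‖q‖ < 1) (m : ℕ) :
    HasSum (fun j : ℕ => (q ^ j * z) ^ (m + 1) / (m + 1)) (negLogQPochTerm q z m) := by
  have hqm : ‖q ^ (m + 1)‖ < 1 := by
    rw [norm_pow]; exact pow_lt_one₀ (norm_nonneg q) hq m.succ_ne_zero
  have h := (hasSum_geometric_of_norm_lt_one hqm).mul_right (z ^ (m + 1) / (m + 1))
  have e : (fun j : ℕ => (q ^ (m + 1)) ^ j * (z ^ (m + 1) / (m + 1))) =
      fun j : ℕ => (q ^ j * z) ^ (m + 1) / (m + 1) := by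
    funext j; ring
  have e' : negLogQPochTerm q z m = (1 - q ^ (m + 1))⁻¹ * (z ^ (m + 1) / (m + 1)) := by
    rw [negLogQPochTerm, div_mul_eq_div_div, div_eq_inv_mul]
  rwa [e', ← e]

lemma summable_norm_pow_succ_div (hq : ‖q‖ < 1) (hz : ‖z‖ < 1) :
    Summable (fun p : ℕ × ℕ => ‖(q ^ p.1 * z) ^ (p.2 + 1) / (p.2 + 1)‖) := by
  refine .of_nonneg_of_le (fun _ => norm_nonneg _) (fun ⟨j, m⟩ => ?_)
    ((summable_geometric_of_lt_one (norm_nonneg q) hq).mul_of_nonneg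
      (summable_geometric_of_lt_one (norm_nonneg z) hz) (fun _ => by positivity)
      (fun _ => by positivity))
  have hn : ‖(m : ℂ) + 1‖ = m + 1 := by exact_mod_cast Complex.norm_natCast (m + 1)
  calc ‖(q ^ j * z) ^ (m + 1) / (m + 1)‖ = (‖q‖ ^ j) ^ (m + 1) * ‖z‖ ^ (m + 1) / (m + 1) := by
        rw [norm_div, hn, norm_pow, norm_mul, norm_pow, mul_pow]
    _ ≤ (‖q‖ ^ j) ^ (m + 1) * ‖z‖ ^ (m + 1) := div_le_self (by positivity) (by linarith)
    _ ≤ ‖q‖ ^ j * ‖z‖ ^ m :=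
        mul_le_mul (pow_le_of_le_one (by positivity) (pow_le_one₀ (norm_nonneg q) hq.le)
            m.succ_ne_zero) (pow_le_pow_of_le_one (norm_nonneg z) hz.le m.le_succ)
          (by positivity) (by positivity)

lemma hasSum_negLogQPochTerm (hq : ‖q‖ < 1) (hz : ‖z‖ < 1) :
    HasSum (negLogQPochTerm q z) (-∑' j : ℕ, log (1 - q ^ j * z)) := by
  -- Sum `(qʲz)^(m+1)/(m+1)` over `m` first to get the logs, over `j` first to get the coefficients.
  obtain ⟨T, hT⟩ := (summable_norm_pow_succ_div hq hz).of_norm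
  have hlog : HasSum (fun j : ℕ => -log (1 - q ^ j * z)) T :=
    hT.prod_fiberwise fun j => (hasSum_taylorSeries_neg_log' (norm_pow_mul_lt_one hq hz j) :)
  have hcoeff : HasSum (negLogQPochTerm q z) T :=
    ((Equiv.prodComm ℕ ℕ).hasSum_iff.mpr hT).prod_fiberwise
      fun m => hasSum_geometric_pow_succ_div hq m
  rwa [← tsum_neg, hlog.tsum_eq]

lemma qPoch_eq_exp_tsum_log (hq : ‖q‖ < 1) (hz : ‖z‖ < 1) :
    qPoch z q = exp (∑' j : ℕ, log (1 - q ^ j * z)) := by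
  have hne (j : ℕ) : 1 - q ^ j * z ≠ 0 := by
    rw [sub_ne_zero]; intro h
    simpa [← h] using norm_pow_mul_lt_one hq hz j
  have hlog : Summable fun j : ℕ => log (1 - q ^ j * z) := by
    simpa [sub_eq_add_neg] using
      summable_log_one_add_of_summable ((summable_geometric_of_norm_lt_one hq).mul_right z).neg
  exact (cexp_tsum_eq_tprod hne hlog).symm

lemma exp_neg_tsum_negLogQPochTerm (hq : ‖q‖ < 1) (hz : ‖z‖ < 1) :
    exp (-∑' m, negLogQPochTerm q z m) = qPoch z q := by
  rw [(hasSum_negLogQPochTerm hq hz).tsum_eq, neg_neg, qPoch_eq_exp_tsum_log hq hz]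

end

lemma qPoch_zero_right (z : ℂ) : qPoch z 0 = 1 - z := by
  rw [qPoch, tprod_eq_mulSingle 0 fun j hj => by simp [zero_pow hj]]
  simp

lemma contraction_coeff_eq {u v : ℂ} (hu : u ≠ 0) (hv : v ≠ 0) (hu1 : u ^ 2 ≠ 1) :
    (u / v - v / u) * (v + v⁻¹) / (u - u⁻¹) = 1 + (v ^ 2 - u ^ 2 / v ^ 2) / (1 - u ^ 2) := by
  have h1 : 1 - u ^ 2 ≠ 0 := sub_ne_zero.mpr hu1.symm
  have h2 : u - u⁻¹ ≠ 0 := by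
    rw [sub_ne_zero]; intro h; apply hu1; field_simp at h; linear_combination h
  field_simp
  ring

lemma FFterm_succ {x : ℝ} (hx0 : 0 < x) (hx1 : x < 1) {r : ℂ} (hr : 0 < r.re) (w : ℂ) (m : ℕ) :
    FFterm x r w (m + 1) = negLogQPochTerm 0 w m + negLogQPochTerm (xpow x (2 * r)) (xpow x 2 * w) m
      - negLogQPochTerm (xpow x (2 * r)) (xpow x (2 * r - 2) * w) m := by
  simp only [FFterm, negLogQPochTerm, mul_pow, ← xpow_mul_natCast]
  push_cast
  rw [show (r - 1) * (m + 1) = r * (m + 1) - (m + 1) by ring,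
    show -(r - 1) * (m + 1) = (m + 1) - r * (m + 1) by ring,
    show -r * (m + 1) = -(r * (m + 1)) by ring,
    show 2 * r * (m + 1) = 2 * (r * (m + 1)) by ring,
    show (2 * r - 2) * (m + 1) = 2 * (r * (m + 1)) - 2 * (m + 1) by ring]
  simp only [xpow_sub, xpow_neg, xpow_two_mul]
  have hu1 : xpow x (r * (m + 1)) ^ 2 ≠ 1 := by
    have hu : ‖xpow x (r * (m + 1))‖ < 1 := norm_xpow_lt_one hx0 hx1 (by simp; positivity)
    intro h
    have : ‖xpow x (r * (m + 1))‖ ^ 2 = 1 := by rw [← norm_pow, h, norm_one]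
    nlinarith [norm_nonneg (xpow x (r * (m + 1)))]
  rw [contraction_coeff_eq (xpow_ne_zero _ _) (xpow_ne_zero _ _) hu1, zero_pow m.succ_ne_zero,
    sub_zero, mul_one]
  have hn : (m : ℂ) + 1 ≠ 0 := by exact_mod_cast m.succ_ne_zero
  have hu1' : 1 - xpow x (r * (m + 1)) ^ 2 ≠ 0 := sub_ne_zero.mpr hu1.symm
  have hv := xpow_ne_zero x (m + 1)
  field_simp
  ring

theorem stmt17 (x : ℝ) (hx0 : 0 < x) (hx1 : x < 1) (r : ℂ) (hr : 0 < r.re)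
    (w : ℂ) (hw : ‖w‖ < 1) (hw' : ‖xpow x (2 * r - 2) * w‖ < 1) :
    Summable (fun m : ℕ => ‖FFterm x r w (m + 1)‖) ∧
    Complex.exp (-∑' m : ℕ, FFterm x r w (m + 1)) =
      (1 - w) * qPoch (xpow x 2 * w) (xpow x (2 * r)) /
        qPoch (xpow x (2 * r - 2) * w) (xpow x (2 * r)) := by
  have h0 : ‖(0 : ℂ)‖ < 1 := by simp
  have hq : ‖xpow x (2 * r)‖ < 1 := norm_xpow_lt_one hx0 hx1 (by simpa using hr)
  have hA : ‖xpow x 2 * w‖ < 1 := by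
    rw [norm_mul]
    exact mul_lt_one_of_nonneg_of_lt_one_right (norm_xpow_lt_one hx0 hx1 (by simp)).le
      (norm_nonneg w) hw
  have hsum : HasSum (fun m => FFterm x r w (m + 1))
      (∑' m, negLogQPochTerm 0 w m + ∑' m, negLogQPochTerm (xpow x (2 * r)) (xpow x 2 * w) m -
        ∑' m, negLogQPochTerm (xpow x (2 * r)) (xpow x (2 * r - 2) * w) m) := by
    simp only [FFterm_succ hx0 hx1 hr]
    exact ((hasSum_negLogQPochTerm h0 hw).summable.hasSum.add
      (hasSum_negLogQPochTerm hq hA).summable.hasSum).sub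
      (hasSum_negLogQPochTerm hq hw').summable.hasSum
  refine ⟨hsum.summable.norm, ?_⟩
  rw [hsum.tsum_eq, show ∀ a b c : ℂ, -(a + b - c) = -a + -b - -c from fun _ _ _ => by ring,
    exp_sub, exp_add, exp_neg_tsum_negLogQPochTerm h0 hw, exp_neg_tsum_negLogQPochTerm hq hA,
    exp_neg_tsum_negLogQPochTerm hq hw', qPoch_zero_right]
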